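/- Define p_2(n,3,x,s) = -∑_j (n/(n-j)) C(n-j,2n-3j) s^j x^{2n-3j} for n ≥ 1. Then p_2(n,3,x+1,x) = (-1)^{n-1} x^n − L_n(x,x), where L_n is the Lucas polynomial. -/

import Mathlib

/-- The bivariate Lucas polynomials: `L 0 = 2`, `L 1 = x`,
`L (n+2) = x * L (n+1) + s * L n`. -/
def lucas (x s : ℚ) : ℕ → ℚ
  | 0 => 2
  | 1 => x
  | (n + 2) => x * lucas x s (n + 1) + s * lucas x s n

/-- The polynomial `p₂(n,3,x,s) = -∑_j (n/(n-j)) C(n-j, 2n-3j) s^j x^{2n-3j}`,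
the sum being over `j` with `3j ≤ 2n` and `2n - 3j ≤ n - j` (i.e. `n ≤ 2j`). -/
def p2three (x s : ℚ) (n : ℕ) : ℚ :=
  -∑ j ∈ (Finset.range (2 * n / 3 + 1)).filter (fun j => n ≤ 2 * j),
    ((n : ℚ) / ((n : ℚ) - (j : ℚ))) * (Nat.choose (n - j) (2 * n - 3 * j) : ℚ) *
      s ^ j * x ^ (2 * n - 3 * j)

/-!
By Waring's formula, `-p2three X S n` is the `n`-th power sum of the roots of
`t ^ 3 - X S t - S ^ 2`, so for `n ≥ 1` it satisfies `u (n + 3) = X S u (n + 1) + S ^ 2 u n`;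
we check this directly from the Pascal rule for Waring's coefficients. For `X = x + 1`, `S = x`
the cubic factors as `(t + x) (t ^ 2 - x t - x)`, whose power sums are `(-x) ^ n + L_n(x, x)`.
Hence both sides satisfy the same third-order recurrence and agree for `n = 1, 2, 3`.
-/

open Finset

/-- Waring's coefficient of `a ^ i * b ^ k` in the power sum `p_{2i+3k}` of the roots of
`t ^ 3 - a t - b`; the coefficient in the summand of `p2three` is `waring i k` for
`i = 2n - 3j`, `k = 2j - n`. -/
def waring (i k : ℕ) : ℚ := (2 * i + 3 * k) / (i + k) * (i + k).choose i

lemma waring_succ_zero (i : ℕ) : waring (i + 1) 0 = 2 := by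
  simp only [waring, Nat.add_zero, Nat.choose_self]
  field_simp
  push_cast
  ring

lemma waring_zero_succ (k : ℕ) : waring 0 (k + 1) = 3 := by
  simp only [waring, Nat.zero_add, Nat.choose_zero_right]
  field_simp
  push_cast
  ring

lemma waring_succ_succ (i k : ℕ) :
    waring (i + 1) (k + 1) = waring i (k + 1) + waring (i + 1) k := by
  have hchoose : ((i + k + 1).choose (i + 1) : ℚ) = (i + k + 1).choose i * (k + 1) / (i + 1) := by
    rw [eq_div_iff (by positivity)]
    exact_mod_cast (Nat.choose_succ_right_eq (i + k + 1) i).trans (by congr 1; omega)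
  simp only [waring]
  rw [show i + 1 + (k + 1) = i + k + 1 + 1 by ring, show i + (k + 1) = i + k + 1 by ring,
    show i + 1 + k = i + k + 1 by ring, Nat.choose_succ_succ']
  push_cast
  rw [hchoose]
  field_simp
  ring

def p2term (X S : ℚ) (n j : ℕ) : ℚ :=
  if n ≤ 2 * j ∧ 3 * j ≤ 2 * n then
    (n : ℚ) / (n - j) * ((n - j).choose (2 * n - 3 * j) : ℚ) * S ^ j * X ^ (2 * n - 3 * j)
  else 0

section

variable {X S : ℚ} {n j : ℕ}

lemma p2term_eq_waring {i k : ℕ} (hn : n = 2 * i + 3 * k) (hj : j = i + 2 * k) :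
    p2term X S n j = waring i k * S ^ j * X ^ i := by
  subst hn hj
  rw [p2term, if_pos (by omega), show 2 * (2 * i + 3 * k) - 3 * (i + 2 * k) = i by omega,
    show 2 * i + 3 * k - (i + 2 * k) = i + k by omega, waring]
  push_cast
  ring_nf

lemma p2term_eq_zero (h : ¬(n ≤ 2 * j ∧ 3 * j ≤ 2 * n)) : p2term X S n j = 0 := if_neg h

lemma p2term_add_three (hn : 1 ≤ n) :
    p2term X S (n + 3) (j + 2) = X * S * p2term X S (n + 1) (j + 1) + S ^ 2 * p2term X S n j := by
  by_cases h : n + 3 ≤ 2 * (j + 2) ∧ 3 * (j + 2) ≤ 2 * (n + 3)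
  · obtain ⟨I, K, hI, hK⟩ : ∃ I K, n + 3 = 2 * I + 3 * K ∧ j + 2 = I + 2 * K :=
      ⟨2 * (n + 3) - 3 * (j + 2), 2 * (j + 2) - (n + 3), by omega, by omega⟩
    rw [p2term_eq_waring hI hK]
    rcases I with _ | i <;> rcases K with _ | k
    · omega
    · obtain ⟨k, rfl⟩ : ∃ k', k = k' + 1 := ⟨k - 1, by omega⟩
      rw [p2term_eq_zero (by omega), p2term_eq_waring (i := 0) (k := k + 1) (by omega) (by omega),
        waring_zero_succ, waring_zero_succ]
      ring
    · obtain ⟨i, rfl⟩ : ∃ i', i = i' + 1 := ⟨i - 1, by omega⟩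
      rw [p2term_eq_zero (n := n) (by omega),
        p2term_eq_waring (i := i + 1) (k := 0) (by omega) (by omega),
        waring_succ_zero, waring_succ_zero]
      ring
    · rw [p2term_eq_waring (i := i) (k := k + 1) (by omega) (by omega),
        p2term_eq_waring (i := i + 1) (k := k) (by omega) (by omega), waring_succ_succ]
      ring
  · rw [p2term_eq_zero h, p2term_eq_zero (by omega), p2term_eq_zero (by omega)]
    ring

lemma p2three_eq_neg_sum_p2term {N : ℕ} (hN : n < N) :
    p2three X S n = -∑ j ∈ range N, p2term X S n j := by
  simp only [p2three, p2term, ← sum_filter]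
  congr 1
  exact sum_congr (by ext j; simp only [mem_filter, mem_range]; omega) fun _ _ => rfl

lemma p2three_add_three (hn : 1 ≤ n) :
    p2three X S (n + 3) = X * S * p2three X S (n + 1) + S ^ 2 * p2three X S n := by
  rw [p2three_eq_neg_sum_p2term (N := n + 2 + 2) (by omega),
    p2three_eq_neg_sum_p2term (N := n + 2 + 1) (by omega),
    p2three_eq_neg_sum_p2term (N := n + 2) (by omega),
    sum_range_succ', sum_range_succ', sum_range_succ' (p2term X S (n + 1)),
    p2term_eq_zero (j := 0) (by omega), p2term_eq_zero (j := 1) (by omega),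
    p2term_eq_zero (n := n + 1) (j := 0) (by omega)]
  simp only [p2term_add_three hn, sum_add_distrib, ← mul_sum]
  ring

end

lemma lucas_add_three (x s : ℚ) (n : ℕ) :
    lucas x s (n + 3) = (x ^ 2 + s) * lucas x s (n + 1) + x * s * lucas x s n := by
  rw [lucas, lucas]
  ring

theorem stmt_12 (n : ℕ) (hn : 1 ≤ n) (x : ℚ) :
    p2three (x + 1) x n = (-1) ^ (n - 1) * x ^ n - lucas x x n := by
  obtain ⟨n, rfl⟩ : ∃ m, n = m + 1 := ⟨n - 1, by omega⟩
  -- shifted by one, as `p2three` violates the recurrence at `0`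
  let E : LinearRecurrence ℚ := ⟨3, ![x ^ 2, x ^ 2 + x, 0]⟩
  have hp : E.IsSolution fun m => p2three (x + 1) x (m + 1) := fun m => by
    rw [Fin.sum_univ_three]
    dsimp [E]
    rw [p2three_add_three (by omega)]
    ring
  have hL : E.IsSolution fun m => (-1) ^ m * x ^ (m + 1) - lucas x x (m + 1) := fun m => by
    rw [Fin.sum_univ_three]
    dsimp [E]
    rw [lucas_add_three]
    ring
  have hinit : Set.EqOn (fun m => p2three (x + 1) x (m + 1))
      (fun m => (-1) ^ m * x ^ (m + 1) - lucas x x (m + 1)) (range E.order) := by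
    intro m hm
    simp only [coe_range, Set.mem_Iio] at hm
    interval_cases m <;> simp [p2three, lucas, sum_filter, sum_range_succ] <;> ring
  simpa using congrFun ((E.eq_iff_eqOn_range_order _ _ hp hL).2 hinit) n
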